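/- arXiv:2204.01806 — 3 statements merged into one kernel-verified Lean document; each statement's English description precedes it below -/
import Mathlib

section
/- Let f: ℝⁿ → ℝ be continuously differentiable and let {x^k} be generated by x^{k+1} = x^k + t_k d^k with t_k ≥ 0, where ∑_{k=1}^∞ t_k ‖d^k‖² < ∞ and {t_k} is bounded from above. If {x^k} has an isolated accumulation point x̄ (i.e., x̄ is an accumulation point and there exists a neighborhood of x̄ containing no other accumulation point of {x^k}), then the whole sequence {x^k} converges to x̄. -/
/-!
The steps `t_k d^k` tend to zero, since `‖t_k d^k‖² ≤ T · t_k ‖d^k‖²`. If the sequence did not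
converge to `x̄`, it would leave a small ball `B(x̄, δ)` infinitely often while also returning to
it infinitely often; with steps shorter than `δ`, each exit lands in the compact annulus
`δ ≤ ‖y - x̄‖ ≤ 2δ`, which therefore contains an accumulation point different from `x̄`, yet
within the isolating neighbourhood of `x̄`.
-/

open Filter Topology Metric

theorem frequently_atTop_and_not_succ {p : ℕ → Prop} (hp : ∃ᶠ k in atTop, p k)
    (hnp : ∃ᶠ k in atTop, ¬p k) : ∃ᶠ k in atTop, p k ∧ ¬p (k + 1) := by
  rw [frequently_atTop] at hp ⊢
  intro M
  obtain ⟨a, haM, ha⟩ := hp M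
  by_contra! hstable
  have hall : ∀ k ≥ a, p k := fun k hk =>
    Nat.le_induction ha (fun j hj hpj => hstable j (haM.trans hj) hpj) k hk
  exact hnp (eventually_atTop.2 ⟨a, fun k hk => not_not.2 (hall k hk)⟩)

theorem tendsto_norm_smul_of_summable {E : Type*} [SeminormedAddCommGroup E] [NormedSpace ℝ E]
    {t : ℕ → ℝ} {d : ℕ → E} {T : ℝ} (ht : ∀ k, 0 ≤ t k) (hT : ∀ k, t k ≤ T)
    (hsum : Summable fun k => t k * ‖d k‖ ^ 2) :
    Tendsto (fun k => ‖t k • d k‖) atTop (𝓝 0) := by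
  have hbound : ∀ k, ‖t k • d k‖ ^ 2 ≤ T * (t k * ‖d k‖ ^ 2) := fun k => by
    have hterm : 0 ≤ t k * ‖d k‖ ^ 2 := by have := ht k; positivity
    calc ‖t k • d k‖ ^ 2 = t k * (t k * ‖d k‖ ^ 2) := by
          rw [norm_smul, Real.norm_of_nonneg (ht k)]; ring
      _ ≤ T * (t k * ‖d k‖ ^ 2) := mul_le_mul_of_nonneg_right (hT k) hterm
  have hsq : Tendsto (fun k => ‖t k • d k‖ ^ 2) atTop (𝓝 0) :=
    squeeze_zero (fun _ => by positivity) hbound (by simpa using hsum.tendsto_atTop_zero.const_mul T)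
  simpa [Real.sqrt_sq_eq_abs] using hsq.sqrt

section Metric

variable {X : Type*} [PseudoMetricSpace X]

theorem frequently_mem_annulus_of_tendsto_dist_succ {x : ℕ → X} {c : X} {δ : ℝ}
    (hstep : Tendsto (fun k => dist (x (k + 1)) (x k)) atTop (𝓝 0)) (hδ : 0 < δ)
    (hin : ∃ᶠ k in atTop, x k ∈ ball c δ) (hout : ∃ᶠ k in atTop, x k ∉ ball c δ) :
    ∃ᶠ k in atTop, x k ∈ closedBall c (2 * δ) \ ball c δ := by
  have hshort : ∀ᶠ k in atTop, dist (x (k + 1)) (x k) < δ := hstep.eventually (eventually_lt_nhds hδ)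
  have hexit : ∃ᶠ k in atTop, x (k + 1) ∈ closedBall c (2 * δ) \ ball c δ := by
    refine ((frequently_atTop_and_not_succ hin hout).and_eventually hshort).mono ?_
    rintro k ⟨⟨hk, hk_succ⟩, hk_short⟩
    refine ⟨mem_closedBall.2 ?_, hk_succ⟩
    linarith [dist_triangle (x (k + 1)) (x k) c, mem_ball.1 hk]
  exact (tendsto_add_atTop_nat 1).frequently hexit

theorem tendsto_of_isolated_mapClusterPt [ProperSpace X] {x : ℕ → X} {c : X} {ε : ℝ}
    (hstep : Tendsto (fun k => dist (x (k + 1)) (x k)) atTop (𝓝 0))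
    (hc : MapClusterPt c atTop x) (hε : 0 < ε)
    (hiso : ∀ y ∈ ball c ε, MapClusterPt y atTop x → y = c) :
    Tendsto x atTop (𝓝 c) := by
  rw [Metric.tendsto_nhds]
  intro r hr
  by_contra hfar
  set δ := min r (ε / 3)
  have hδ : 0 < δ := by positivity
  have hout : ∃ᶠ k in atTop, x k ∉ ball c δ := (not_eventually.1 hfar).mono
    fun k hk hkδ => hk ((mem_ball.1 hkδ).trans_le (min_le_left _ _))
  have hin : ∃ᶠ k in atTop, x k ∈ ball c δ := hc.frequently (ball_mem_nhds c hδ)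
  obtain ⟨y, ⟨hy_near, hy_far⟩, hy⟩ :=
    ((isCompact_closedBall c (2 * δ)).diff isOpen_ball).exists_mapClusterPt_of_frequently
      (frequently_mem_annulus_of_tendsto_dist_succ hstep hδ hin hout)
  have hyε : y ∈ ball c ε :=
    closedBall_subset_ball (by linarith [min_le_right r (ε / 3)]) hy_near
  exact hy_far (hiso y hyε hy ▸ mem_ball_self hδ)

end Metric

theorem stmt4_general {n : ℕ}
    (x d : ℕ → EuclideanSpace ℝ (Fin n)) (t : ℕ → ℝ)
    (ht : ∀ k, 0 ≤ t k)
    (hstep : ∀ k, x (k + 1) = x k + t k • d k)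
    (hsum : Summable (fun k => t k * ‖d k‖ ^ 2))
    (T : ℝ) (hT : ∀ k, t k ≤ T)
    (xbar : EuclideanSpace ℝ (Fin n))
    (hacc : ∃ φ : ℕ → ℕ, StrictMono φ ∧ Tendsto (x ∘ φ) atTop (nhds xbar))
    (hiso : ∃ ε > (0 : ℝ), ∀ y ∈ Metric.ball xbar ε,
      (∃ φ : ℕ → ℕ, StrictMono φ ∧ Tendsto (x ∘ φ) atTop (nhds y)) → y = xbar) :
    Tendsto x atTop (nhds xbar) := by
  obtain ⟨φ, hφ, hφ_lim⟩ := hacc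
  obtain ⟨ε, hε, hiso⟩ := hiso
  have hdist : Tendsto (fun k => dist (x (k + 1)) (x k)) atTop (𝓝 0) := by
    simpa only [hstep, dist_eq_norm, add_sub_cancel_left] using
      tendsto_norm_smul_of_summable ht hT hsum
  exact tendsto_of_isolated_mapClusterPt hdist (hφ_lim.mapClusterPt.of_comp hφ.tendsto_atTop) hε
    fun y hy hy_cluster => hiso y hy hy_cluster.tendsto_subseq

/-- Theorem 3.3(ii): if `x^{k+1} = x^k + t_k d^k`, `∑ t_k ‖d^k‖² < ∞`, `{t_k}` is bounded
above, and `{x^k}` has an isolated accumulation point `xbar`, then the whole sequence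
converges to `xbar`. -/
theorem stmt4 {n : ℕ} (f : EuclideanSpace ℝ (Fin n) → ℝ) (hf : ContDiff ℝ 1 f)
    (x d : ℕ → EuclideanSpace ℝ (Fin n)) (t : ℕ → ℝ)
    (ht : ∀ k, 0 ≤ t k)
    (hstep : ∀ k, x (k + 1) = x k + t k • d k)
    (hsum : Summable (fun k => t k * ‖d k‖ ^ 2))
    (T : ℝ) (hT : ∀ k, t k ≤ T)
    (xbar : EuclideanSpace ℝ (Fin n))
    (hacc : ∃ φ : ℕ → ℕ, StrictMono φ ∧ Tendsto (x ∘ φ) atTop (nhds xbar))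
    (hiso : ∃ ε > (0 : ℝ), ∀ y ∈ Metric.ball xbar ε,
      (∃ φ : ℕ → ℕ, StrictMono φ ∧ Tendsto (x ∘ φ) atTop (nhds y)) → y = xbar) :
    Tendsto x atTop (nhds xbar) :=
  stmt4_general x d t ht hstep hsum T hT xbar hacc hiso
end

section
/- Let f: ℝⁿ → ℝ be continuously differentiable satisfying the L-descent condition for some L > 0, and let sequences {x^k}, {g^k}, {d^k}, {ε_k}, {r_k}, {t_k} follow the IRG scheme with ρ_k = ε_k for all k. Assume inf_k f(x^k) > −∞ and that there exist δ, δ' > 0 with δ' ≤ (2 − δ)/L and t_k ∈ [δ', (2 − δ)/L] for all k. Then ε_k ↓ 0, every accumulation point of {x^k} is a stationary point of f, and ∇f(x^k) → 0 as k → ∞. -/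
/-!
With `t_k ∈ [δ', (2 - δ)/L]` and `⟨∇f(x^k), d^k⟩ ≤ -‖d^k‖²`, the descent condition gives
`f(x^{k+1}) + (δ'δ/2)‖d^k‖² ≤ f(x^k)`, so `∑ ‖d^k‖² < ∞` and `d^k → 0`. On a serious step
(`‖g^k‖ > r_k + ε_k`) we have `‖d^k‖ = ‖g^k‖ - ε_k > r_k`, and `r` stays frozen between null
steps, so null steps occur infinitely often; each of them multiplies `ε` by `θ` and `r` by `μ`, whence `ε_k, r_k ↓ 0`.
Finally `‖∇f(x^k)‖ ≤ r_k + ‖d^k‖ + 2ε_k`, and accumulation points are stationary by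
continuity of `∇f`.
-/

open Filter

/-- The general IRG scheme (Algorithm 1): inexact gradients `g^k` with automatically
controlled errors `ε_k` (and manual errors `ρ_k`), radius updates with factors
`μ, θ ∈ (0,1)`, reduced directions `d^k`, and iterations `x^{k+1} = x^k + t_k d^k`. -/
def IRGScheme {n : ℕ} (f : EuclideanSpace ℝ (Fin n) → ℝ)
    (x g d : ℕ → EuclideanSpace ℝ (Fin n)) (ε r ρ t : ℕ → ℝ) (μ θ : ℝ) : Prop :=
  (0 < μ ∧ μ < 1) ∧ (0 < θ ∧ θ < 1) ∧
  (∀ k, 0 < ε k) ∧ (∀ k, 0 < r k) ∧ (∀ k, 0 < ρ k) ∧ (∀ k, 0 < t k) ∧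
  (∀ k, ‖g k - gradient f (x k)‖ ≤ min (ε k) (ρ k)) ∧
  (∀ k, ‖g k‖ ≤ r k + ε k →
    r (k + 1) = μ * r k ∧ ε (k + 1) = θ * ε k ∧ d k = 0) ∧
  (∀ k, r k + ε k < ‖g k‖ →
    r (k + 1) = r k ∧ ε (k + 1) = ε k ∧
      d k = -(((‖g k‖ - ε k) / ‖g k‖) • g k)) ∧
  (∀ k, x (k + 1) = x k + t k • d k)

open scoped Topology InnerProductSpace

section

variable {E : Type*} [NormedAddCommGroup E] [InnerProductSpace ℝ E]

theorem norm_mul_sub_le_inner_of_norm_sub_le {G g : E} {ε : ℝ} (h : ‖g - G‖ ≤ ε) :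
    ‖g‖ * (‖g‖ - ε) ≤ ⟪G, g⟫_ℝ := by
  have hsplit : ⟪G, g⟫_ℝ = ‖g‖ ^ 2 - ⟪g - G, g⟫_ℝ := by
    rw [inner_sub_left, real_inner_self_eq_norm_sq]; ring
  have herr : ⟪g - G, g⟫_ℝ ≤ ε * ‖g‖ :=
    (real_inner_le_norm _ _).trans (mul_le_mul_of_nonneg_right h (norm_nonneg _))
  nlinarith

theorem le_sub_mul_sq_of_descent {f : E → ℝ} {L t : ℝ} {a G v : E}
    (hdesc : ∀ b, f b ≤ f a + ⟪G, b - a⟫_ℝ + L / 2 * ‖b - a‖ ^ 2)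
    (hv : ⟪G, v⟫_ℝ ≤ -‖v‖ ^ 2) (ht : 0 ≤ t) :
    f (a + t • v) ≤ f a - t * (1 - L * t / 2) * ‖v‖ ^ 2 := by
  have h := hdesc (a + t • v)
  rw [add_sub_cancel_left, real_inner_smul_right, norm_smul, Real.norm_eq_abs,
    abs_of_nonneg ht] at h
  nlinarith [mul_le_mul_of_nonneg_left hv ht]

theorem ContDiff.continuous_gradient [CompleteSpace E] {f : E → ℝ} (hf : ContDiff ℝ 1 f) :
    Continuous (gradient f) :=
  (InnerProductSpace.toDual ℝ E).symm.continuous.comp (hf.continuous_fderiv one_ne_zero)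

end

theorem summable_of_succ_add_le {u v : ℕ → ℝ} (hv : ∀ k, 0 ≤ v k)
    (hu : BddBelow (Set.range u)) (h : ∀ k, u (k + 1) + v k ≤ u k) : Summable v := by
  obtain ⟨B, hB⟩ := hu
  refine summable_of_sum_range_le hv (c := u 0 - B) fun K => ?_
  calc ∑ k ∈ Finset.range K, v k
      ≤ ∑ k ∈ Finset.range K, (u k - u (k + 1)) :=
        Finset.sum_le_sum fun k _ => by linarith [h k]
    _ = u 0 - u K := Finset.sum_range_sub' u K
    _ ≤ u 0 - B := by linarith [hB ⟨K, rfl⟩]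

theorem tendsto_zero_of_frequently_succ_eq_mul {a : ℕ → ℝ} {q : ℝ} (ha : Antitone a)
    (hbdd : BddBelow (Set.range a)) (hq : q ≠ 1)
    (hfreq : ∃ᶠ k in atTop, a (k + 1) = q * a k) : Tendsto a atTop (𝓝 0) := by
  have hlim := tendsto_atTop_ciInf ha hbdd
  have hfix : ⨅ k, a k = q * ⨅ k, a k :=
    tendsto_nhds_unique_of_frequently_eq (hlim.comp (tendsto_add_atTop_nat 1))
      (hlim.const_mul q) hfreq
  have hzero : ⨅ k, a k = 0 := by
    have : (1 - q) * ⨅ k, a k = 0 := by linarith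
    exact (mul_eq_zero.mp this).resolve_left (sub_ne_zero.mpr hq.symm)
  rwa [hzero] at hlim

namespace IRGScheme

variable {n : ℕ} {f : EuclideanSpace ℝ (Fin n) → ℝ} {x g d : ℕ → EuclideanSpace ℝ (Fin n)}
  {ε r ρ t : ℕ → ℝ} {μ θ : ℝ}

theorem eps_pos (h : IRGScheme f x g d ε r ρ t μ θ) (k : ℕ) : 0 < ε k := h.2.2.1 k

theorem r_pos (h : IRGScheme f x g d ε r ρ t μ θ) (k : ℕ) : 0 < r k := h.2.2.2.1 k

theorem mu_lt_one (h : IRGScheme f x g d ε r ρ t μ θ) : μ < 1 := h.1.2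

theorem theta_lt_one (h : IRGScheme f x g d ε r ρ t μ θ) : θ < 1 := h.2.1.2

theorem norm_sub_gradient_le (h : IRGScheme f x g d ε r ρ t μ θ) (k : ℕ) :
    ‖g k - gradient f (x k)‖ ≤ ε k :=
  (h.2.2.2.2.2.2.1 k).trans (min_le_left _ _)

theorem null_step (h : IRGScheme f x g d ε r ρ t μ θ) {k : ℕ} (hk : ‖g k‖ ≤ r k + ε k) :
    r (k + 1) = μ * r k ∧ ε (k + 1) = θ * ε k ∧ d k = 0 :=
  h.2.2.2.2.2.2.2.1 k hk

theorem serious_step (h : IRGScheme f x g d ε r ρ t μ θ) {k : ℕ} (hk : r k + ε k < ‖g k‖) :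
    r (k + 1) = r k ∧ ε (k + 1) = ε k ∧ d k = -(((‖g k‖ - ε k) / ‖g k‖) • g k) :=
  h.2.2.2.2.2.2.2.2.1 k hk

theorem x_succ (h : IRGScheme f x g d ε r ρ t μ θ) (k : ℕ) : x (k + 1) = x k + t k • d k :=
  h.2.2.2.2.2.2.2.2.2 k

theorem norm_dir_of_serious (h : IRGScheme f x g d ε r ρ t μ θ) {k : ℕ}
    (hk : r k + ε k < ‖g k‖) : ‖d k‖ = ‖g k‖ - ε k := by
  have hg : 0 < ‖g k‖ - ε k := by linarith [h.r_pos k]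
  rw [(h.serious_step hk).2.2, norm_neg, norm_smul, Real.norm_eq_abs,
    abs_of_nonneg (by positivity), div_mul_cancel₀ _ (by linarith [h.eps_pos k])]

theorem inner_gradient_dir_le (h : IRGScheme f x g d ε r ρ t μ θ) (k : ℕ) :
    ⟪gradient f (x k), d k⟫_ℝ ≤ -‖d k‖ ^ 2 := by
  rcases le_or_gt ‖g k‖ (r k + ε k) with hk | hk
  · simp [(h.null_step hk).2.2]
  have hg : 0 < ‖g k‖ - ε k := by linarith [h.r_pos k]
  have hc : 0 ≤ (‖g k‖ - ε k) / ‖g k‖ := by positivity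
  have hinner := mul_le_mul_of_nonneg_left
    (norm_mul_sub_le_inner_of_norm_sub_le (h.norm_sub_gradient_le k)) hc
  rw [h.norm_dir_of_serious hk, (h.serious_step hk).2.2, inner_neg_right,
    real_inner_smul_right]
  rw [← mul_assoc, div_mul_cancel₀ _ (by linarith [h.eps_pos k]), ← sq] at hinner
  linarith

theorem norm_gradient_le (h : IRGScheme f x g d ε r ρ t μ θ) (k : ℕ) :
    ‖gradient f (x k)‖ ≤ r k + ‖d k‖ + 2 * ε k := by
  have hgrad : ‖gradient f (x k)‖ ≤ ‖g k‖ + ε k := by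
    linarith [norm_le_norm_add_norm_sub (g k) (gradient f (x k)), h.norm_sub_gradient_le k]
  rcases le_or_gt ‖g k‖ (r k + ε k) with hk | hk
  · linarith [norm_nonneg (d k)]
  · linarith [h.norm_dir_of_serious hk, h.r_pos k]

/-- Sufficient decrease: `t (1 - L t / 2) ≥ δ' δ / 2` on the admissible stepsize interval. -/
theorem sufficient_decrease (h : IRGScheme f x g d ε r ρ t μ θ) {L δ δ' : ℝ} (hL : 0 < L)
    (hdesc : ∀ a b : EuclideanSpace ℝ (Fin n),
      f b ≤ f a + ⟪gradient f a, b - a⟫_ℝ + L / 2 * ‖b - a‖ ^ 2)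
    (hδ : 0 < δ) (hδ' : 0 < δ') (hstep : ∀ k, t k ∈ Set.Icc δ' ((2 - δ) / L)) (k : ℕ) :
    f (x (k + 1)) + δ' * (δ / 2) * ‖d k‖ ^ 2 ≤ f (x k) := by
  obtain ⟨hlow, hup⟩ := hstep k
  have hLt : t k * L ≤ 2 - δ := (le_div_iff₀ hL).mp hup
  have hfactor : δ' * (δ / 2) ≤ t k * (1 - L * t k / 2) := by
    nlinarith [mul_le_mul_of_nonneg_right hlow (by linarith : (0 : ℝ) ≤ 1 - L * t k / 2)]
  have hdecr := le_sub_mul_sq_of_descent (hdesc (x k)) (h.inner_gradient_dir_le k)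
    (hδ'.le.trans hlow)
  rw [← h.x_succ] at hdecr
  nlinarith [mul_le_mul_of_nonneg_right hfactor (sq_nonneg ‖d k‖)]

theorem antitone_eps (h : IRGScheme f x g d ε r ρ t μ θ) : Antitone ε := by
  refine antitone_nat_of_succ_le fun k => ?_
  rcases le_or_gt ‖g k‖ (r k + ε k) with hk | hk
  · rw [(h.null_step hk).2.1]
    exact mul_le_of_le_one_left (h.eps_pos k).le h.theta_lt_one.le
  · exact (h.serious_step hk).2.1.le

theorem antitone_r (h : IRGScheme f x g d ε r ρ t μ θ) : Antitone r := by
  refine antitone_nat_of_succ_le fun k => ?_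
  rcases le_or_gt ‖g k‖ (r k + ε k) with hk | hk
  · rw [(h.null_step hk).1]
    exact mul_le_of_le_one_left (h.r_pos k).le h.mu_lt_one.le
  · exact (h.serious_step hk).1.le

theorem frequently_null_step (h : IRGScheme f x g d ε r ρ t μ θ)
    (hd : Tendsto (fun k => ‖d k‖) atTop (𝓝 0)) :
    ∃ᶠ k in atTop, ‖g k‖ ≤ r k + ε k := by
  by_contra hcon
  simp only [not_frequently, not_le, eventually_atTop] at hcon
  obtain ⟨K, hser⟩ := hcon
  have hfrozen : ∀ k, K ≤ k → r k = r K := by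
    intro k hk
    induction k, hk using Nat.le_induction with
    | base => rfl
    | succ m hm ih => rw [(h.serious_step (hser m hm)).1, ih]
  obtain ⟨k, hsmall, hk⟩ :=
    ((hd.eventually_lt_const (h.r_pos K)).and (eventually_ge_atTop K)).exists
  linarith [h.norm_dir_of_serious (hser k hk), hser k hk, hfrozen k hk]

theorem tendsto_eps_zero (h : IRGScheme f x g d ε r ρ t μ θ)
    (hd : Tendsto (fun k => ‖d k‖) atTop (𝓝 0)) : Tendsto ε atTop (𝓝 0) :=
  tendsto_zero_of_frequently_succ_eq_mul h.antitone_eps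
    ⟨0, by rintro _ ⟨k, rfl⟩; exact (h.eps_pos k).le⟩ h.theta_lt_one.ne
    ((h.frequently_null_step hd).mono fun _ hk => (h.null_step hk).2.1)

theorem tendsto_r_zero (h : IRGScheme f x g d ε r ρ t μ θ)
    (hd : Tendsto (fun k => ‖d k‖) atTop (𝓝 0)) : Tendsto r atTop (𝓝 0) :=
  tendsto_zero_of_frequently_succ_eq_mul h.antitone_r
    ⟨0, by rintro _ ⟨k, rfl⟩; exact (h.r_pos k).le⟩ h.mu_lt_one.ne
    ((h.frequently_null_step hd).mono fun _ hk => (h.null_step hk).1)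

end IRGScheme

theorem stmt16_general {n : ℕ} (f : EuclideanSpace ℝ (Fin n) → ℝ) (hf : ContDiff ℝ 1 f)
    (L : ℝ) (hL : 0 < L)
    (hdesc : ∀ a b : EuclideanSpace ℝ (Fin n),
      f b ≤ f a + (inner ℝ (gradient f a) (b - a) : ℝ) + L / 2 * ‖b - a‖ ^ 2)
    (x g d : ℕ → EuclideanSpace ℝ (Fin n)) (ε r t : ℕ → ℝ) (μ θ : ℝ)
    (hirg : IRGScheme f x g d ε r ε t μ θ)
    (hinf : BddBelow (Set.range fun k => f (x k)))
    (δ δ' : ℝ) (hδ : 0 < δ) (hδ' : 0 < δ')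
    (hstep : ∀ k, t k ∈ Set.Icc δ' ((2 - δ) / L)) :
    Tendsto ε atTop (nhds 0) ∧
    (∀ xbar : EuclideanSpace ℝ (Fin n),
      (∃ φ : ℕ → ℕ, StrictMono φ ∧ Tendsto (x ∘ φ) atTop (nhds xbar)) →
      gradient f xbar = 0) ∧
    Tendsto (fun k => gradient f (x k)) atTop (nhds 0) := by
  have hc : 0 < δ' * (δ / 2) := by positivity
  have hsum := summable_of_succ_add_le (fun k => by positivity) hinf
    (hirg.sufficient_decrease hL hdesc hδ hδ' hstep)
  have hd : Tendsto (fun k => ‖d k‖) atTop (𝓝 0) := by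
    simpa using ((summable_mul_left_iff hc.ne').mp hsum).tendsto_atTop_zero.sqrt
  have hε := hirg.tendsto_eps_zero hd
  have hgrad : Tendsto (fun k => gradient f (x k)) atTop (𝓝 0) := by
    refine tendsto_zero_iff_norm_tendsto_zero.mpr <|
      squeeze_zero (fun _ => norm_nonneg _) hirg.norm_gradient_le ?_
    simpa using ((hirg.tendsto_r_zero hd).add hd).add (hε.const_mul 2)
  refine ⟨hε, fun xbar ⟨φ, hφ, hx⟩ => ?_, hgrad⟩
  exact tendsto_nhds_unique ((hf.continuous_gradient.tendsto xbar).comp hx)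
    (hgrad.comp hφ.tendsto_atTop)

/-- Theorem 5.3: for the IRG method with constant-type stepsizes
`t_k ∈ [δ', (2-δ)/L]`, under the L-descent condition, `ρ_k = ε_k` and
`inf f(x^k) > -∞`, one has `ε_k ↓ 0`, every accumulation point of `{x^k}` is a
stationary point of `f`, and `∇f(x^k) → 0`. -/
theorem stmt16 {n : ℕ} (f : EuclideanSpace ℝ (Fin n) → ℝ) (hf : ContDiff ℝ 1 f)
    (L : ℝ) (hL : 0 < L)
    (hdesc : ∀ a b : EuclideanSpace ℝ (Fin n),
      f b ≤ f a + (inner ℝ (gradient f a) (b - a) : ℝ) + L / 2 * ‖b - a‖ ^ 2)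
    (x g d : ℕ → EuclideanSpace ℝ (Fin n)) (ε r t : ℕ → ℝ) (μ θ : ℝ)
    (hirg : IRGScheme f x g d ε r ε t μ θ)
    (hinf : BddBelow (Set.range fun k => f (x k)))
    (δ δ' : ℝ) (hδ : 0 < δ) (hδ' : 0 < δ') (hδδ' : δ' ≤ (2 - δ) / L)
    (hstep : ∀ k, t k ∈ Set.Icc δ' ((2 - δ) / L)) :
    Tendsto ε atTop (nhds 0) ∧
    (∀ xbar : EuclideanSpace ℝ (Fin n),
      (∃ φ : ℕ → ℕ, StrictMono φ ∧ Tendsto (x ∘ φ) atTop (nhds xbar)) →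
      gradient f xbar = 0) ∧
    Tendsto (fun k => gradient f (x k)) atTop (nhds 0) :=
  stmt16_general f hf L hL hdesc x g d ε r t μ θ hirg hinf δ δ' hδ hδ' hstep
end

section
/- Let f: ℝⁿ → ℝ be continuously differentiable and let sequences {x^k}, {g^k}, {d^k}, {ε_k}, {r_k}, {ρ_k}, {t_k} follow the IRG scheme with backtracking stepsizes. Assume ρ_k → 0 as k → ∞, that there is an infinite set J ⊂ ℕ with x^k → x̄ along J for some x̄ ∈ ℝⁿ, and that ∇f is Lipschitz continuous on some ball 𝔹(x̄, δ) with δ > 0 (i.e., ∇f is locally Lipschitzian around x̄). Then the stepsize subsequence {t_k}_{k ∈ J} is bounded away from zero: there exists t̄ > 0 with t_k ≥ t̄ for all k ∈ J. -/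
/-!
Where `∇f` is `K`-Lipschitz, the mean value theorem gives the descent inequality
`f (a + u v) ≤ f a + u ⟪∇f a, v⟫ + K u² ‖v‖²`. The shrinking factor `(‖g‖ - ε) / ‖g‖` of the IRG
direction absorbs the gradient error `‖g^k - ∇f(x^k)‖ ≤ ε_k` exactly, so `⟪∇f(x^k), d^k⟫ ≤ -‖d^k‖²`;
by Cauchy–Schwarz also `‖d^k‖ ≤ ‖∇f(x^k)‖`, which is bounded near `xbar`. Hence, once `x^k` lies
within `δ/2` of `xbar`, every stepsize `u ≤ s` with `K s ≤ 1 - β` and `s ‖d^k‖ ≤ δ/2` passes the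
Armijo test, and backtracking stops with `t_k ≥ min τ (γ s)`. Only finitely many indices of the
subsequence remain, and they lower the bound to a positive minimum.
-/

open Filter

/-- Backtracking stepsize selection: `t_k = τ` on null iterations, and otherwise
`t_k = γ^{m_k}` with `m_k` the smallest nonnegative integer satisfying the linesearch
condition `f(x^k + γ^m d^k) ≤ f(x^k) - β γ^m ‖d^k‖²`. -/
def BacktrackingStepsize {n : ℕ} (f : EuclideanSpace ℝ (Fin n) → ℝ)
    (x d : ℕ → EuclideanSpace ℝ (Fin n)) (t : ℕ → ℝ) (β γ τ : ℝ) : Prop :=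
  (0 < β ∧ β < 1) ∧ (0 < γ ∧ γ < 1) ∧ (0 < τ ∧ τ < 1) ∧
  (∀ k, d k = 0 → t k = τ) ∧
  (∀ k, d k ≠ 0 → ∃ m : ℕ,
    t k = γ ^ m ∧
    f (x k + γ ^ m • d k) ≤ f (x k) - β * γ ^ m * ‖d k‖ ^ 2 ∧
    ∀ j < m, ¬ f (x k + γ ^ j • d k) ≤ f (x k) - β * γ ^ j * ‖d k‖ ^ 2)

open Metric NNReal InnerProductSpace RealInnerProductSpace

section InnerProductSpace

variable {E : Type*} [NormedAddCommGroup E] [InnerProductSpace ℝ E]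

theorem le_add_inner_add_mul_sq_of_lipschitzOnWith_gradient [CompleteSpace E] {f : E → ℝ}
    (hf : Differentiable ℝ f) {s : Set E} (hs : Convex ℝ s) {K : ℝ≥0}
    (hlip : LipschitzOnWith K (gradient f) s) {a b : E} (ha : a ∈ s) (hb : b ∈ s) :
    f b ≤ f a + ⟪gradient f a, b - a⟫ + K * ‖b - a‖ ^ 2 := by
  have hbound : ∀ y ∈ segment ℝ a b, ‖fderiv ℝ f y - fderiv ℝ f a‖ ≤ K * ‖b - a‖ := by
    intro y hy
    have hgrad : ‖gradient f y - gradient f a‖ ≤ K * ‖y - a‖ :=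
      hlip.norm_sub_le (hs.segment_subset ha hb hy) ha
    rw [gradient, gradient, ← map_sub, LinearIsometryEquiv.norm_map] at hgrad
    exact hgrad.trans (by gcongr; exact norm_sub_le_of_mem_segment hy)
  have hmvt := (convex_segment a b).norm_image_sub_le_of_norm_hasFDerivWithin_le'
    (fun y _ ↦ (hf y).hasFDerivAt.hasFDerivWithinAt) hbound
    (left_mem_segment ℝ a b) (right_mem_segment ℝ a b)
  have hinner : ⟪gradient f a, b - a⟫ = fderiv ℝ f a (b - a) := toDual_symm_apply
  rw [hinner, sq, ← mul_assoc]
  linarith [(Real.le_norm_self _).trans hmvt]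

theorem armijo_of_lipschitzOnWith_gradient [CompleteSpace E] {f : E → ℝ}
    (hf : Differentiable ℝ f) {s : Set E} (hs : Convex ℝ s) {K : ℝ≥0}
    (hlip : LipschitzOnWith K (gradient f) s) {a v : E}
    (hv : ⟪gradient f a, v⟫ ≤ -‖v‖ ^ 2) (ha : a ∈ s) {u β : ℝ} (hu : 0 ≤ u)
    (hau : a + u • v ∈ s) (hKu : K * u ≤ 1 - β) :
    f (a + u • v) ≤ f a - β * u * ‖v‖ ^ 2 := by
  have hdesc := le_add_inner_add_mul_sq_of_lipschitzOnWith_gradient hf hs hlip ha hau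
  rw [add_sub_cancel_left, real_inner_smul_right, norm_smul, Real.norm_of_nonneg hu] at hdesc
  nlinarith [mul_le_mul_of_nonneg_left hv hu, mul_le_mul_of_nonneg_right hKu
    (mul_nonneg hu (sq_nonneg ‖v‖))]

noncomputable def reducedDirection (g : E) (ε : ℝ) : E := -(((‖g‖ - ε) / ‖g‖) • g)

theorem inner_reducedDirection_le {g v : E} {ε : ℝ} (hgv : ‖g - v‖ ≤ ε) (hεg : ε ≤ ‖g‖) :
    ⟪v, reducedDirection g ε⟫ ≤ -‖reducedDirection g ε‖ ^ 2 := by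
  rcases eq_or_ne g 0 with rfl | hg
  · simp [reducedDirection]
  have hg' : 0 < ‖g‖ := norm_pos_iff.2 hg
  have hvg : ‖g‖ * (‖g‖ - ε) ≤ ⟪v, g⟫ := by
    have h := (real_inner_le_norm (g - v) g).trans (mul_le_mul_of_nonneg_right hgv hg'.le)
    rw [inner_sub_left, real_inner_self_eq_norm_sq] at h
    linarith [real_inner_comm g v]
  have hc : 0 ≤ (‖g‖ - ε) / ‖g‖ := div_nonneg (by linarith) hg'.le
  simp only [reducedDirection, inner_neg_right, real_inner_smul_right, norm_neg, norm_smul,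
    Real.norm_of_nonneg hc, div_mul_cancel₀ _ hg'.ne']
  calc -((‖g‖ - ε) / ‖g‖ * ⟪v, g⟫) ≤ -((‖g‖ - ε) / ‖g‖ * (‖g‖ * (‖g‖ - ε))) := by gcongr
    _ = -(‖g‖ - ε) ^ 2 := by field_simp

theorem norm_le_of_inner_le_neg_norm_sq {v d : E} (h : ⟪v, d⟫ ≤ -‖d‖ ^ 2) : ‖d‖ ≤ ‖v‖ := by
  have hcs := (abs_le.1 (abs_real_inner_le_norm v d)).1
  nlinarith [norm_nonneg d, norm_nonneg v]

end InnerProductSpace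

theorem mul_le_pow_of_forall_lt_not {γ s : ℝ} (hγ : 0 < γ) (hγ1 : γ ≤ 1) (hs1 : s ≤ 1)
    {P : ℝ → Prop} (hP : ∀ u, 0 < u → u ≤ s → P u) {m : ℕ} (hm : ∀ j < m, ¬ P (γ ^ j)) :
    γ * s ≤ γ ^ m := by
  cases m with
  | zero => rw [pow_zero]; nlinarith
  | succ j =>
    have hsj : s < γ ^ j := by
      by_contra! h
      exact hm j j.lt_succ_self (hP _ (pow_pos hγ j) h)
    rw [pow_succ']
    gcongr

theorem exists_pos_forall_le_of_eventually_le {u : ℕ → ℝ} (hu : ∀ k, 0 < u k) {c : ℝ}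
    (hc : 0 < c) (h : ∀ᶠ k in atTop, c ≤ u k) : ∃ b > 0, ∀ k, b ≤ u k := by
  obtain ⟨N, hN⟩ := eventually_atTop.1 h
  refine ⟨min c ((Finset.range (N + 1)).inf' Finset.nonempty_range_add_one u), ?_, fun k ↦ ?_⟩
  · exact lt_min hc ((Finset.lt_inf'_iff _).2 fun k _ ↦ hu k)
  rcases le_or_gt k N with hk | hk
  · exact (min_le_right _ _).trans (Finset.inf'_le _ (Finset.mem_range.2 (Nat.lt_succ_of_le hk)))
  · exact (min_le_left _ _).trans (hN k hk.le)

theorem exists_pos_lt_one_mul_lt_mul_lt {a b c e : ℝ} (hb : 0 < b) (he : 0 < e) :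
    ∃ s > 0, s < 1 ∧ a * s < b ∧ c * s < e := by
  have hsmall : ∀ᶠ s in nhds (0 : ℝ), s < 1 ∧ a * s < b ∧ c * s < e :=
    (continuousAt_id.eventually_lt continuousAt_const one_pos).and <|
      ((continuousAt_const.mul continuousAt_id).eventually_lt continuousAt_const
        (by simpa using hb)).and
      ((continuousAt_const.mul continuousAt_id).eventually_lt continuousAt_const
        (by simpa using he))
  exact ((hsmall.filter_mono (nhdsWithin_le_nhds (s := Set.Ioi 0))).and
    self_mem_nhdsWithin).exists.imp fun s ⟨hsmall, hs⟩ ↦ ⟨hs, hsmall⟩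

section IRG

variable {n : ℕ} {f : EuclideanSpace ℝ (Fin n) → ℝ} {x g d : ℕ → EuclideanSpace ℝ (Fin n)}
  {ε r ρ t : ℕ → ℝ} {μ θ β γ τ : ℝ}

theorem IRGScheme.inner_gradient_le (h : IRGScheme f x g d ε r ρ t μ θ) (k : ℕ) :
    ⟪gradient f (x k), d k⟫ ≤ -‖d k‖ ^ 2 := by
  obtain ⟨-, -, -, hr, -, -, herr, hnull, hdescent, -⟩ := h
  rcases le_or_gt ‖g k‖ (r k + ε k) with hk | hk
  · simp [(hnull k hk).2.2]
  · rw [(hdescent k hk).2.2]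
    exact inner_reducedDirection_le ((herr k).trans (min_le_left _ _)) (by linarith [hr k])

theorem BacktrackingStepsize.min_le_of_forall_armijo (h : BacktrackingStepsize f x d t β γ τ)
    {k : ℕ} {s : ℝ} (hs1 : s ≤ 1)
    (harmijo : ∀ u, 0 < u → u ≤ s → f (x k + u • d k) ≤ f (x k) - β * u * ‖d k‖ ^ 2) :
    min τ (γ * s) ≤ t k := by
  obtain ⟨-, hγ, -, hnull, hsearch⟩ := h
  rcases eq_or_ne (d k) 0 with hd | hd
  · exact (hnull k hd).symm ▸ min_le_left _ _
  · obtain ⟨m, htm, -, hfirst⟩ := hsearch k hd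
    rw [htm]
    exact (min_le_right _ _).trans (mul_le_pow_of_forall_lt_not hγ.1 hγ.2.le hs1 harmijo hfirst)

theorem le_stepsize_of_mem_closedBall (hf : Differentiable ℝ f)
    (hirg : IRGScheme f x g d ε r ρ t μ θ) (hbt : BacktrackingStepsize f x d t β γ τ)
    {xbar : EuclideanSpace ℝ (Fin n)} {δ : ℝ} {K : ℝ≥0}
    (hlip : LipschitzOnWith K (gradient f) (closedBall xbar δ)) {s : ℝ} (hs1 : s ≤ 1)
    (hKs : K * s ≤ 1 - β) (hsδ : (‖gradient f xbar‖ + K * δ) * s ≤ δ / 2) {k : ℕ}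
    (hk : x k ∈ closedBall xbar (δ / 2)) :
    min τ (γ * s) ≤ t k := by
  rw [mem_closedBall_iff_norm] at hk
  have hδ : 0 ≤ δ := by linarith [norm_nonneg (x k - xbar)]
  have hxk : x k ∈ closedBall xbar δ := mem_closedBall_iff_norm.2 (by linarith)
  have hdir := hirg.inner_gradient_le k
  have hdk : ‖d k‖ ≤ ‖gradient f xbar‖ + K * δ := calc
    ‖d k‖ ≤ ‖gradient f (x k)‖ := norm_le_of_inner_le_neg_norm_sq hdir
    _ ≤ ‖gradient f xbar‖ + ‖gradient f (x k) - gradient f xbar‖ := norm_le_insert' _ _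
    _ ≤ ‖gradient f xbar‖ + K * ‖x k - xbar‖ := by
      gcongr; exact hlip.norm_sub_le hxk (mem_closedBall_self hδ)
    _ ≤ ‖gradient f xbar‖ + K * δ := by gcongr; linarith
  refine hbt.min_le_of_forall_armijo hs1 fun u hu hus ↦ ?_
  have hstep : x k + u • d k ∈ closedBall xbar δ := by
    rw [mem_closedBall_iff_norm, add_sub_right_comm]
    calc ‖x k - xbar + u • d k‖ ≤ ‖x k - xbar‖ + u * ‖d k‖ := by
          simpa [norm_smul, abs_of_pos hu] using norm_add_le (x k - xbar) (u • d k)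
      _ ≤ δ / 2 + (‖gradient f xbar‖ + K * δ) * s := by rw [mul_comm _ s]; gcongr; linarith
      _ ≤ δ := by linarith
  exact armijo_of_lipschitzOnWith_gradient hf (convex_closedBall _ _) hlip hdir hxk hu.le hstep
    (hKs.trans' (by gcongr))

end IRG

theorem stmt17_general {n : ℕ} (f : EuclideanSpace ℝ (Fin n) → ℝ) (hf : ContDiff ℝ 1 f)
    (x g d : ℕ → EuclideanSpace ℝ (Fin n)) (ε r ρ t : ℕ → ℝ) (μ θ β γ τ : ℝ)
    (hirg : IRGScheme f x g d ε r ρ t μ θ)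
    (hbt : BacktrackingStepsize f x d t β γ τ)
    (xbar : EuclideanSpace ℝ (Fin n))
    (φ : ℕ → ℕ)
    (hconv : Tendsto (x ∘ φ) atTop (nhds xbar))
    (δ : ℝ) (hδ : 0 < δ) (K : NNReal)
    (hlip : LipschitzOnWith K (gradient f) (Metric.closedBall xbar δ)) :
    ∃ tbar > (0 : ℝ), ∀ k, tbar ≤ t (φ k) := by
  have ht : ∀ k, 0 < t k := hirg.2.2.2.2.2.1
  have hτ : 0 < τ := hbt.2.2.1.1
  have hγ : 0 < γ := hbt.2.1.1
  obtain ⟨s, hs, hs1, hKs, hsδ⟩ := exists_pos_lt_one_mul_lt_mul_lt (a := K)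
    (c := ‖gradient f xbar‖ + K * δ) (sub_pos.2 hbt.1.2) (half_pos hδ)
  have hnear : ∀ᶠ k in atTop, x (φ k) ∈ closedBall xbar (δ / 2) :=
    hconv.eventually_mem (closedBall_mem_nhds xbar (half_pos hδ))
  exact exists_pos_forall_le_of_eventually_le (fun k ↦ ht (φ k))
    (lt_min hτ (mul_pos hγ hs)) (hnear.mono fun k hk ↦ le_stepsize_of_mem_closedBall
      (hf.differentiable one_ne_zero) hirg hbt hlip hs1.le hKs.le hsδ.le hk)

/-- Proposition 5.7: for the IRG method with backtracking stepsizes, if `ρ_k → 0`,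
`x^k → xbar` along a subsequence `φ`, and `∇f` is Lipschitz continuous on a ball
`𝔹(xbar, δ)` with `δ > 0`, then the stepsizes along that subsequence are bounded
away from zero. -/
theorem stmt17 {n : ℕ} (f : EuclideanSpace ℝ (Fin n) → ℝ) (hf : ContDiff ℝ 1 f)
    (x g d : ℕ → EuclideanSpace ℝ (Fin n)) (ε r ρ t : ℕ → ℝ) (μ θ β γ τ : ℝ)
    (hirg : IRGScheme f x g d ε r ρ t μ θ)
    (hbt : BacktrackingStepsize f x d t β γ τ)
    (hρ : Tendsto ρ atTop (nhds 0))
    (xbar : EuclideanSpace ℝ (Fin n))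
    (φ : ℕ → ℕ) (hφ : StrictMono φ)
    (hconv : Tendsto (x ∘ φ) atTop (nhds xbar))
    (δ : ℝ) (hδ : 0 < δ) (K : NNReal)
    (hlip : LipschitzOnWith K (gradient f) (Metric.closedBall xbar δ)) :
    ∃ tbar > (0 : ℝ), ∀ k, tbar ≤ t (φ k) :=
  stmt17_general f hf x g d ε r ρ t μ θ β γ τ hirg hbt xbar φ hconv δ hδ K hlip
end
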